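/- arXiv:2302.03459 — 6 statements merged into one kernel-verified Lean document; each statement's English description precedes it below -/
import Mathlib

section
/- For all x, y in [-R, R], the expectation E_{(w,b)}[1_{wx+b>0} · 1_{wy+b>0}], where w is uniform on {-1,1} and b is uniform on [-R,R], equals 1/2 - |x-y|/(4R). -/
open MeasureTheory intervalIntegral

/-- Truncated power `(u)_+^α`, with the convention `(u)_+^0 = 1_{u>0}`. -/
noncomputable def truncPow (α : ℕ) (u : ℝ) : ℝ := if 0 < u then u ^ α else 0

/-! Both units fire at `b` exactly when `b` exceeds the larger threshold `max (-x) (-y)`, so each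
of the two integrals is the length of the part of `[-R, R]` above that threshold:
`R + min x y` for `w = 1` and `R - max x y` for `w = -1`. Averaging gives
`(2R - (max x y - min x y)) / (4R) = 1/2 - |x - y| / (4R)`. -/

theorem truncPow_zero_mul_truncPow_zero (a c b : ℝ) :
    truncPow 0 (a + b) * truncPow 0 (c + b) = (Set.Ioi (-min a c)).indicator 1 b := by
  have hb : -min a c < b ↔ 0 < a + b ∧ 0 < c + b := by
    rw [neg_lt, lt_min_iff]
    constructor <;> rintro ⟨h₁, h₂⟩ <;> constructor <;> linarith
  simp only [Set.indicator_apply, Set.mem_Ioi, hb]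
  by_cases ha : 0 < a + b <;> by_cases hc : 0 < c + b <;> simp [truncPow, ha, hc]

theorem integral_indicator_Ioi_one_of_mem_Icc {l u m : ℝ} (hm : m ∈ Set.Icc l u) :
    ∫ t in l..u, (Set.Ioi m).indicator (1 : ℝ → ℝ) t = u - m := by
  rw [integral_of_le (hm.1.trans hm.2), integral_indicator_one measurableSet_Ioi,
    measureReal_restrict_apply measurableSet_Ioi, Set.inter_comm, Set.Ioc_inter_Ioi,
    max_eq_right hm.1, Real.volume_real_Ioc_of_le hm.2]

theorem integral_truncPow_zero_mul_truncPow_zero {R a c : ℝ} (ha : a ∈ Set.Icc (-R) R)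
    (hc : c ∈ Set.Icc (-R) R) :
    ∫ b in (-R)..R, truncPow 0 (a + b) * truncPow 0 (c + b) = R + min a c := by
  simp_rw [truncPow_zero_mul_truncPow_zero]
  rw [integral_indicator_Ioi_one_of_mem_Icc, sub_neg_eq_add]
  constructor
  · simp only [neg_le_neg_iff, min_le_iff]; exact Or.inl ha.2
  · simp only [neg_le, le_min_iff]; exact ⟨ha.1, hc.1⟩

/-- For `x, y ∈ [-R, R]`, with `w` uniform on `{-1, 1}` and `b` uniform on `[-R, R]`
independent, `E[1_{wx+b>0} · 1_{wy+b>0}] = 1/2 - |x - y|/(4R)`. -/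
theorem stmt0 (R x y : ℝ) (hR : 0 < R) (hx : x ∈ Set.Icc (-R) R) (hy : y ∈ Set.Icc (-R) R) :
    (1 / 2) * ((1 / (2 * R)) * ∫ b in (-R)..R, truncPow 0 (x + b) * truncPow 0 (y + b))
      + (1 / 2) * ((1 / (2 * R)) * ∫ b in (-R)..R, truncPow 0 (-x + b) * truncPow 0 (-y + b))
    = 1 / 2 - |x - y| / (4 * R) := by
  have neg_mem : ∀ {t : ℝ}, t ∈ Set.Icc (-R) R → -t ∈ Set.Icc (-R) R := fun ht =>
    ⟨neg_le_neg ht.2, neg_le.mp ht.1⟩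
  rw [integral_truncPow_zero_mul_truncPow_zero hx hy,
    integral_truncPow_zero_mul_truncPow_zero (neg_mem hx) (neg_mem hy), min_neg_neg,
    ← max_sub_min_eq_abs' x y]
  field_simp
  ring
end

section
/- For all x, y in [-R, R], the expectation E_{(w,b)}[(wx+b)_+ · (wy+b)_+], where w is uniform on {-1,1} and b uniform on [-R,R], equals R²/6 + xy/2 + |x-y|³/(24R). -/
/-!
On `[-R, R]` the integrand `(a + b)_+ (c + b)_+` with `a ≤ c` vanishes for `b ≤ -a` and is the
quadratic `(a + b)(c + b)` for `b ≥ -a`, so each of the two expectations is an elementary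
polynomial integral. For `x ≤ y` the two halves contribute `(R + x)^3/3 + (y - x)(R + x)^2/2`
and `(R - y)^3/3 + (y - x)(R - y)^2/2`, whose sum over `4R` is the stated closed form; the case
`y ≤ x` follows by symmetry.
-/

open MeasureTheory intervalIntegral

lemma integral_add_mul_add (a c R : ℝ) :
    ∫ b in (-a)..R, (a + b) * (c + b) = (R + a) ^ 3 / 3 + (c - a) * (R + a) ^ 2 / 2 := by
  have hderiv : ∀ b ∈ Set.uIcc (-a) R,
      HasDerivAt (fun b => b ^ 3 / 3 + (a + c) / 2 * b ^ 2 + a * c * b) ((a + b) * (c + b)) b := by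
    intro b _
    have h := (((hasDerivAt_pow 3 b).div_const 3).add
      ((hasDerivAt_pow 2 b).const_mul ((a + c) / 2))).add ((hasDerivAt_id b).const_mul (a * c))
    exact h.congr_deriv (by ring)
  rw [integral_eq_sub_of_hasDerivAt hderiv (by apply Continuous.intervalIntegrable; fun_prop)]
  ring

lemma integral_max_mul_max_of_le (R a c : ℝ) (hRa : -R ≤ a) (haR : a ≤ R) (hac : a ≤ c) :
    ∫ b in (-R)..R, max (a + b) 0 * max (c + b) 0
      = (R + a) ^ 3 / 3 + (c - a) * (R + a) ^ 2 / 2 := by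
  have hcont : Continuous fun b : ℝ => max (a + b) 0 * max (c + b) 0 := by fun_prop
  have hvanish : ∫ b in (-R)..(-a), max (a + b) 0 * max (c + b) 0 = 0 := by
    refine (integral_congr (g := fun _ => 0) fun b hb => ?_).trans integral_zero
    rw [Set.uIcc_of_le (by linarith)] at hb
    simp [max_eq_right (by linarith [hb.2] : a + b ≤ 0)]
  have hquadratic : ∫ b in (-a)..R, max (a + b) 0 * max (c + b) 0
      = ∫ b in (-a)..R, (a + b) * (c + b) := by
    refine integral_congr fun b hb => ?_
    rw [Set.uIcc_of_le (by linarith)] at hb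
    simp only [max_eq_left (by linarith [hb.1] : 0 ≤ a + b),
      max_eq_left (by linarith [hb.1] : 0 ≤ c + b)]
  rw [← integral_add_adjacent_intervals (hcont.intervalIntegrable _ _)
    (hcont.intervalIntegrable _ _), hvanish, hquadratic, zero_add,
    integral_add_mul_add]

/-- For `x, y ∈ [-R, R]`, with `w` uniform on `{-1, 1}` and `b` uniform on `[-R, R]`
independent, `E[(wx+b)_+ (wy+b)_+] = R²/6 + xy/2 + |x-y|³/(24R)`. -/
theorem stmt1 (R x y : ℝ) (hR : 0 < R) (hx : x ∈ Set.Icc (-R) R) (hy : y ∈ Set.Icc (-R) R) :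
    (1 / 2) * ((1 / (2 * R)) * ∫ b in (-R)..R, max (x + b) 0 * max (y + b) 0)
      + (1 / 2) * ((1 / (2 * R)) * ∫ b in (-R)..R, max (-x + b) 0 * max (-y + b) 0)
    = R ^ 2 / 6 + x * y / 2 + |x - y| ^ 3 / (24 * R) := by
  wlog hxy : x ≤ y generalizing x y
  · have h := this y x hy hx (le_of_not_ge hxy)
    simp only [mul_comm (max (y + _) 0), mul_comm (max (-y + _) 0), mul_comm y x,
      abs_sub_comm y x] at h
    exact h
  obtain ⟨hx₁, hx₂⟩ := hx
  obtain ⟨hy₁, hy₂⟩ := hy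
  have hpos : ∫ b in (-R)..R, max (x + b) 0 * max (y + b) 0
      = (R + x) ^ 3 / 3 + (y - x) * (R + x) ^ 2 / 2 :=
    integral_max_mul_max_of_le R x y hx₁ (by linarith) hxy
  have hneg : ∫ b in (-R)..R, max (-x + b) 0 * max (-y + b) 0
      = (R - y) ^ 3 / 3 + (y - x) * (R - y) ^ 2 / 2 := by
    simp only [mul_comm (max (-x + _) 0)]
    rw [integral_max_mul_max_of_le R (-y) (-x) (by linarith) (by linarith) (by linarith)]
    ring
  rw [hpos, hneg, abs_of_nonpos (by linarith : x - y ≤ 0)]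
  field_simp
  ring
end

section
/- For all x, y in [-R, R], the expectation E_{(w,b)}[(wx+b)_+² · (wy+b)_+²], where w is uniform on {-1,1} and b uniform on [-R,R], equals R⁴/10 + (2R²xy)/3 + (R²/6)(x²+y²) + x²y²/2 - |x-y|⁵/(120R). -/
/-!
For `x ≤ y` the integrand `(x+b)_+² (y+b)_+²` vanishes for `b ≤ -x` and is the polynomial
`t² (t + (y-x))²` in `t = x + b` beyond, so the integral over `[-R, R]` is a polynomial in
`R + min x y` and `|x - y|`. The sign flip `w = -1` contributes the same with `min x y` replaced by
`-max x y`. The average is therefore a polynomial in `R⁻¹`, `R` and `min x y`, `max x y`, `|x - y|`,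
and it is rewritten in `x, y` through `min + max = x + y`, `min * max = x * y` and
`max - min = |x - y|`.
-/

open MeasureTheory intervalIntegral

theorem integral_sq_mul_add_sq (L d : ℝ) :
    ∫ t in (0 : ℝ)..L, t ^ 2 * (t + d) ^ 2 = L ^ 5 / 5 + d * L ^ 4 / 2 + d ^ 2 * L ^ 3 / 3 := by
  have hderiv (t : ℝ) : HasDerivAt (fun t => t ^ 5 / 5 + d * t ^ 4 / 2 + d ^ 2 * t ^ 3 / 3)
      (t ^ 2 * (t + d) ^ 2) t := by
    refine ((((hasDerivAt_pow 5 t).div_const 5).add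
      (((hasDerivAt_pow 4 t).const_mul d).div_const 2)).add
      (((hasDerivAt_pow 3 t).const_mul (d ^ 2)).div_const 3)).congr_deriv ?_
    push_cast
    ring
  rw [integral_eq_sub_of_hasDerivAt (fun t _ => hderiv t)
    ((by fun_prop : Continuous fun t : ℝ => t ^ 2 * (t + d) ^ 2).intervalIntegrable _ _)]
  ring

theorem integral_max_sq_mul_max_sq_of_le {R x y : ℝ} (hx : x ∈ Set.Icc (-R) R) (hxy : x ≤ y) :
    ∫ b in (-R)..R, max (x + b) 0 ^ 2 * max (y + b) 0 ^ 2
      = ∫ t in (0 : ℝ)..R + x, t ^ 2 * (t + (y - x)) ^ 2 := by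
  have hc : Continuous fun b : ℝ => max (x + b) 0 ^ 2 * max (y + b) 0 ^ 2 := by fun_prop
  rw [← integral_add_adjacent_intervals (b := -x) (hc.intervalIntegrable _ _)
    (hc.intervalIntegrable _ _)]
  have hleft : ∫ b in (-R)..(-x), max (x + b) 0 ^ 2 * max (y + b) 0 ^ 2 = 0 := by
    refine (integral_congr fun b hb => ?_).trans integral_zero
    rw [Set.uIcc_of_le (by linarith [hx.2])] at hb
    simp [max_eq_right (by linarith [hb.2] : x + b ≤ 0)]
  have hright : ∫ b in (-x)..R, max (x + b) 0 ^ 2 * max (y + b) 0 ^ 2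
      = ∫ b in (-x)..R, (x + b) ^ 2 * ((x + b) + (y - x)) ^ 2 := by
    refine integral_congr fun b hb => ?_
    rw [Set.uIcc_of_le (by linarith [hx.1])] at hb
    rw [max_eq_left (by linarith [hb.1] : 0 ≤ x + b), max_eq_left (by linarith [hb.1] : 0 ≤ y + b)]
    ring
  rw [hleft, hright, zero_add, integral_comp_add_left (fun t => t ^ 2 * (t + (y - x)) ^ 2) x,
    add_neg_cancel, add_comm x R]

theorem integral_max_sq_mul_max_sq {R x y : ℝ} (hx : x ∈ Set.Icc (-R) R)
    (hy : y ∈ Set.Icc (-R) R) :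
    ∫ b in (-R)..R, max (x + b) 0 ^ 2 * max (y + b) 0 ^ 2
      = (R + min x y) ^ 5 / 5 + |x - y| * (R + min x y) ^ 4 / 2
        + |x - y| ^ 2 * (R + min x y) ^ 3 / 3 := by
  wlog hxy : x ≤ y generalizing x y
  · simpa only [mul_comm, min_comm, abs_sub_comm] using this hy hx (le_of_not_ge hxy)
  rw [integral_max_sq_mul_max_sq_of_le hx hxy, integral_sq_mul_add_sq, min_eq_left hxy,
    abs_sub_comm, abs_of_nonneg (sub_nonneg.2 hxy)]

/-- For `x, y ∈ [-R, R]`, with `w` uniform on `{-1, 1}` and `b` uniform on `[-R, R]`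
independent, `E[(wx+b)_+² (wy+b)_+²]
  = R⁴/10 + 2R²xy/3 + (R²/6)(x²+y²) + x²y²/2 - |x-y|⁵/(120R)`. -/
theorem stmt2 (R x y : ℝ) (hR : 0 < R) (hx : x ∈ Set.Icc (-R) R) (hy : y ∈ Set.Icc (-R) R) :
    (1 / 2) * ((1 / (2 * R)) * ∫ b in (-R)..R, max (x + b) 0 ^ 2 * max (y + b) 0 ^ 2)
      + (1 / 2) * ((1 / (2 * R)) * ∫ b in (-R)..R, max (-x + b) 0 ^ 2 * max (-y + b) 0 ^ 2)
    = R ^ 4 / 10 + 2 * R ^ 2 * (x * y) / 3 + (R ^ 2 / 6) * (x ^ 2 + y ^ 2)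
        + x ^ 2 * y ^ 2 / 2 - |x - y| ^ 5 / (120 * R) := by
  have hneg {z : ℝ} (hz : z ∈ Set.Icc (-R) R) : -z ∈ Set.Icc (-R) R :=
    ⟨neg_le_neg hz.2, by linarith [hz.1]⟩
  rw [integral_max_sq_mul_max_sq hx hy, integral_max_sq_mul_max_sq (hneg hx) (hneg hy),
    min_neg_neg, neg_sub_neg, abs_sub_comm y x, ← max_sub_min_eq_abs',
    show x ^ 2 + y ^ 2 = (x + y) ^ 2 - 2 * (x * y) by ring,
    show x ^ 2 * y ^ 2 = (x * y) ^ 2 by ring, ← min_add_max x y, ← min_mul_max x y]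
  field_simp
  ring
end

section
/- Let α be a natural number and R > 0. For all x, y in [-R,R], (1/(4R)) ∫_{-R}^{R} (x-b)_+^α (y-b)_+^α db + (1/(4R)) ∫_{-R}^{R} (b-x)_+^α (b-y)_+^α db = (1/(4R)) ∫_{-R}^{R} (x-b)^α (y-b)^α db + c_α |x-y|^{2α+1}/R, where c_α = (-1)^{α+1} (α!)²/(4·(2α+1)!). -/
open MeasureTheory intervalIntegral

/-!
For `x ≤ y` the two truncated products are the polynomial `(x - b)^α (y - b)^α` cut down to
`b < x` and to `b > y` respectively, so together they integrate to the full polynomial integral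
minus its integral over `[x, y]`. Writing `x - b = -(b - x)`, that middle piece is `(-1)^α` times
the Beta integral `∫_x^y (b - x)^α (y - b)^α db = (α!)² (y - x)^(2α+1) / (2α+1)!`, which follows
from integrating by parts.
-/

open Set Nat

lemma truncPow_of_pos {α : ℕ} {u : ℝ} (hu : 0 < u) : truncPow α u = u ^ α := if_pos hu

lemma truncPow_of_nonpos {α : ℕ} {u : ℝ} (hu : u ≤ 0) : truncPow α u = 0 := if_neg hu.not_gt

lemma truncPow_sub_mul_truncPow_sub_eq_indicator_Iio {α : ℕ} {x y : ℝ} (hxy : x ≤ y) :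
    (fun t => truncPow α (x - t) * truncPow α (y - t))
      = (Iio x).indicator fun t => (x - t) ^ α * (y - t) ^ α := by
  funext t
  by_cases ht : t < x
  · rw [indicator_of_mem (s := Iio x) ht, truncPow_of_pos (by linarith),
      truncPow_of_pos (by linarith)]
  · rw [indicator_of_notMem (s := Iio x) ht, truncPow_of_nonpos (by linarith), zero_mul]

lemma truncPow_sub_mul_truncPow_sub_eq_indicator_Ioi {α : ℕ} {x y : ℝ} (hxy : x ≤ y) :
    (fun t => truncPow α (t - x) * truncPow α (t - y))
      = (Ioi y).indicator fun t => (x - t) ^ α * (y - t) ^ α := by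
  funext t
  by_cases ht : y < t
  · rw [indicator_of_mem (s := Ioi y) ht, truncPow_of_pos (by linarith),
      truncPow_of_pos (by linarith), ← mul_pow, ← mul_pow]
    ring
  · rw [indicator_of_notMem (s := Ioi y) ht, truncPow_of_nonpos (u := t - y) (by linarith),
      mul_zero]

namespace intervalIntegral

variable {E : Type*} [NormedAddCommGroup E] [NormedSpace ℝ E] {μ : Measure ℝ} {f : ℝ → E}
  {a b c : ℝ}

theorem integral_indicator_Iio [NullSingletonClass μ] (h : c ∈ Icc a b) :
    ∫ t in a..b, (Iio c).indicator f t ∂μ = ∫ t in a..c, f t ∂μ := by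
  rw [integral_of_le h.1, integral_of_le (h.1.trans h.2),
    MeasureTheory.integral_indicator measurableSet_Iio,
    Measure.restrict_restrict measurableSet_Iio, integral_Ioc_eq_integral_Ioo]
  congr 2
  ext t
  simp only [mem_inter_iff, mem_Iio, mem_Ioc, mem_Ioo]
  grind

theorem integral_indicator_Ioi (h : c ∈ Icc a b) :
    ∫ t in a..b, (Ioi c).indicator f t ∂μ = ∫ t in c..b, f t ∂μ := by
  rw [integral_of_le (h.1.trans h.2), integral_of_le h.2,
    MeasureTheory.integral_indicator measurableSet_Ioi,
    Measure.restrict_restrict measurableSet_Ioi]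
  congr 2
  ext t
  simp only [mem_inter_iff, mem_Ioi, mem_Ioc]
  grind

end intervalIntegral

theorem integral_sub_pow_mul_sub_pow_succ (a b : ℝ) (m n : ℕ) :
    (m + 1) * ∫ t in a..b, (t - a) ^ m * (b - t) ^ (n + 1)
      = (n + 1) * ∫ t in a..b, (t - a) ^ (m + 1) * (b - t) ^ n := by
  have hu : ∀ t ∈ uIcc a b, HasDerivAt (fun t => (t - a) ^ (m + 1)) ((m + 1) * (t - a) ^ m) t := by
    intro t _
    simpa using (hasDerivAt_pow (m + 1) (t - a)).comp_sub_const t a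
  have hv : ∀ t ∈ uIcc a b,
      HasDerivAt (fun t => (b - t) ^ (n + 1)) (-((n + 1) * (b - t) ^ n)) t := by
    intro t _
    simpa using (hasDerivAt_pow (n + 1) (b - t)).comp_const_sub b t
  have ibp := integral_mul_deriv_eq_deriv_mul hu hv
    (Continuous.intervalIntegrable (by fun_prop) _ _)
    (Continuous.intervalIntegrable (by fun_prop) _ _)
  simp only [sub_self, zero_pow (succ_ne_zero _), mul_zero, zero_mul, mul_neg,
    intervalIntegral.integral_neg, mul_left_comm _ ((n : ℝ) + 1), mul_assoc,
    intervalIntegral.integral_const_mul] at ibp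
  linarith

theorem integral_sub_pow_mul_sub_pow (a b : ℝ) (m n : ℕ) :
    ∫ t in a..b, (t - a) ^ m * (b - t) ^ n
      = m ! * n ! / (m + n + 1)! * (b - a) ^ (m + n + 1) := by
  induction n generalizing m with
  | zero =>
    simp only [pow_zero, mul_one, add_zero, integral_comp_sub_right fun t => t ^ m, sub_self,
      integral_pow, zero_pow (succ_ne_zero m), sub_zero, factorial_zero, factorial_succ m]
    push_cast
    field_simp
  | succ n ih =>
    have h := integral_sub_pow_mul_sub_pow_succ a b m n
    rw [ih, show m + 1 + n + 1 = m + (n + 1) + 1 by ring] at h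
    rw [← mul_right_inj' (by positivity : (m : ℝ) + 1 ≠ 0), h, factorial_succ m, factorial_succ n]
    push_cast
    field_simp

theorem integral_truncPow_mul_add_integral_truncPow_mul {α : ℕ} {a b x y : ℝ}
    (hx : x ∈ Icc a b) (hy : y ∈ Icc a b) :
    (∫ t in a..b, truncPow α (x - t) * truncPow α (y - t))
        + ∫ t in a..b, truncPow α (t - x) * truncPow α (t - y)
      = (∫ t in a..b, (x - t) ^ α * (y - t) ^ α)
        - (-1) ^ α * (α ! ^ 2 / (2 * α + 1)!) * |x - y| ^ (2 * α + 1) := by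
  wlog hxy : x ≤ y generalizing x y
  · simp only [mul_comm (truncPow α (x - _)), mul_comm (truncPow α (_ - x)),
      mul_comm ((x - _) ^ α), abs_sub_comm x y]
    exact this hy hx (le_of_not_ge hxy)
  have hp (c d : ℝ) : IntervalIntegrable (fun t => (x - t) ^ α * (y - t) ^ α) volume c d :=
    Continuous.intervalIntegrable (by fun_prop) c d
  have middle : ∫ t in x..y, (x - t) ^ α * (y - t) ^ α
      = (-1) ^ α * (α ! ^ 2 / (2 * α + 1)!) * |x - y| ^ (2 * α + 1) := by
    have reflect (t : ℝ) :
        (x - t) ^ α * (y - t) ^ α = (-1) ^ α * ((t - x) ^ α * (y - t) ^ α) := by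
      rw [← neg_sub t x, neg_pow, mul_assoc]
    rw [integral_congr fun t _ => reflect t, intervalIntegral.integral_const_mul,
      integral_sub_pow_mul_sub_pow, abs_sub_comm, abs_of_nonneg (sub_nonneg.2 hxy), two_mul]
    ring
  rw [truncPow_sub_mul_truncPow_sub_eq_indicator_Iio hxy,
    truncPow_sub_mul_truncPow_sub_eq_indicator_Ioi hxy, integral_indicator_Iio hx,
    integral_indicator_Ioi hy, ← middle, ← integral_add_adjacent_intervals (hp a x) (hp x b),
    ← integral_add_adjacent_intervals (hp x y) (hp y b)]
  ring

theorem stmt3_general (α : ℕ) (R x y : ℝ)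
    (hx : x ∈ Set.Icc (-R) R) (hy : y ∈ Set.Icc (-R) R) :
    (1 / (4 * R)) * (∫ b in (-R)..R, truncPow α (x - b) * truncPow α (y - b))
      + (1 / (4 * R)) * (∫ b in (-R)..R, truncPow α (b - x) * truncPow α (b - y))
    = (1 / (4 * R)) * (∫ b in (-R)..R, (x - b) ^ α * (y - b) ^ α)
      + ((-1 : ℝ) ^ (α + 1) * (Nat.factorial α : ℝ) ^ 2
          / (4 * (Nat.factorial (2 * α + 1) : ℝ)))
        * |x - y| ^ (2 * α + 1) / R := by
  rw [← mul_add, integral_truncPow_mul_add_integral_truncPow_mul hx hy]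
  ring

/-- For `x, y ∈ [-R, R]`:
`(1/(4R)) ∫_{-R}^R (x-b)_+^α (y-b)_+^α db + (1/(4R)) ∫_{-R}^R (b-x)_+^α (b-y)_+^α db
  = (1/(4R)) ∫_{-R}^R (x-b)^α (y-b)^α db + c_α |x-y|^{2α+1} / R`,
with `c_α = (-1)^{α+1} (α!)² / (4 (2α+1)!)`. -/
theorem stmt3 (α : ℕ) (R x y : ℝ) (hR : 0 < R)
    (hx : x ∈ Set.Icc (-R) R) (hy : y ∈ Set.Icc (-R) R) :
    (1 / (4 * R)) * (∫ b in (-R)..R, truncPow α (x - b) * truncPow α (y - b))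
      + (1 / (4 * R)) * (∫ b in (-R)..R, truncPow α (b - x) * truncPow α (b - y))
    = (1 / (4 * R)) * (∫ b in (-R)..R, (x - b) ^ α * (y - b) ^ α)
      + ((-1 : ℝ) ^ (α + 1) * (Nat.factorial α : ℝ) ^ 2
          / (4 * (Nat.factorial (2 * α + 1) : ℝ)))
        * |x - y| ^ (2 * α + 1) / R :=
  stmt3_general α R x y hx hy
end

section
/- Let f : [-R,R] → ℝ be continuously differentiable, and set η_+(b) = 2R f'(b) + (f(R)+f(-R)) and η_-(b) = -2R f'(b) + (f(R)+f(-R)). Then for all x in (-R,R), f(x) = (1/(4R)) ∫_{-R}^{R} [η_+(b) 1_{x>b} + η_-(b) 1_{b>x}] db. -/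
open MeasureTheory intervalIntegral

/-- For `f` continuously differentiable on `[-R,R]`, with
`η_+(b) = 2R f'(b) + (f(R)+f(-R))` and `η_-(b) = -2R f'(b) + (f(R)+f(-R))`, one has
`f(x) = (1/(4R)) ∫_{-R}^R [η_+(b) 1_{x>b} + η_-(b) 1_{b>x}] db` for all `x ∈ (-R,R)`. -/
theorem stmt8 (R : ℝ) (hR : 0 < R) (f f' : ℝ → ℝ)
    (hderiv : ∀ x ∈ Set.Icc (-R) R, HasDerivWithinAt f (f' x) (Set.Icc (-R) R) x)
    (hcont : ContinuousOn f' (Set.Icc (-R) R)) :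
    ∀ x ∈ Set.Ioo (-R) R,
      f x = (1 / (4 * R)) * ∫ b in (-R)..R,
        ((2 * R * f' b + (f R + f (-R))) * truncPow 0 (x - b)
          + (-(2 * R) * f' b + (f R + f (-R))) * truncPow 0 (b - x)) := by
  intro x hx
  set S : ℝ := f R + f (-R) with hS
  set g : ℝ → ℝ := fun b => (2 * R * f' b + S) * truncPow 0 (x - b)
      + (-(2 * R) * f' b + S) * truncPow 0 (b - x) with hg
  have hfcont : ContinuousOn f (Set.Icc (-R) R) := fun t ht =>
    (hderiv t ht).continuousWithinAt
  have hxI : x ∈ Set.Icc (-R) R := Set.mem_Icc_of_Ioo hx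
  -- interval integrability of f' on subintervals
  have hint1 : IntervalIntegrable f' volume (-R) x :=
    (hcont.mono (by
      rw [Set.uIcc_of_le hx.1.le]
      exact Set.Icc_subset_Icc le_rfl hx.2.le)).intervalIntegrable
  have hint2 : IntervalIntegrable f' volume x R :=
    (hcont.mono (by
      rw [Set.uIcc_of_le hx.2.le]
      exact Set.Icc_subset_Icc hx.1.le le_rfl)).intervalIntegrable
  -- FTC on [-R, x] and [x, R]
  have ftc : ∀ a b : ℝ, a ≤ b → Set.Icc a b ⊆ Set.Icc (-R) R →
      IntervalIntegrable f' volume a b →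
      ∫ t in a..b, f' t = f b - f a := by
    intro a b hab hsub hint
    refine integral_eq_sub_of_hasDeriv_right_of_le hab (hfcont.mono hsub) ?_ hint
    intro t ht
    have htI : t ∈ Set.Icc (-R) R := hsub (Set.mem_Icc_of_Ioo ht)
    have hlt : t < R := lt_of_lt_of_le ht.2 (hsub (Set.right_mem_Icc.2 hab)).2
    exact (hderiv t htI).mono_of_mem_nhdsWithin
      (Icc_mem_nhdsGT_of_mem ⟨htI.1, hlt⟩)
  have ftc1 : ∫ t in (-R)..x, f' t = f x - f (-R) :=
    ftc (-R) x hx.1.le (Set.Icc_subset_Icc le_rfl hx.2.le) hint1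
  have ftc2 : ∫ t in x..R, f' t = f R - f x :=
    ftc x R hx.2.le (Set.Icc_subset_Icc hx.1.le le_rfl) hint2
  -- a.e. facts
  have hae : ∀ᵐ b : ℝ, b ≠ x := by
    have : (volume : Measure ℝ) {x} = 0 := measure_singleton x
    filter_upwards [measure_eq_zero_iff_ae_notMem.mp this] with b hb
    simpa using hb
  -- g equals simple functions a.e. on each piece
  have hgeq1 : ∀ b, b < x → g b = 2 * R * f' b + S := by
    intro b hb
    simp only [hg, truncPow]
    rw [if_pos (by linarith), if_neg (by linarith)]
    ring
  have hgeq2 : ∀ b, x < b → g b = -(2 * R) * f' b + S := by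
    intro b hb
    simp only [hg, truncPow]
    rw [if_neg (by linarith), if_pos (by linarith)]
    ring
  have hcongr1 : ∫ b in (-R)..x, g b = ∫ b in (-R)..x, (2 * R * f' b + S) := by
    apply intervalIntegral.integral_congr_ae
    filter_upwards [hae] with b hb hbI
    rw [Set.uIoc_of_le hx.1.le] at hbI
    exact hgeq1 b (lt_of_le_of_ne hbI.2 hb)
  have hcongr2 : ∫ b in x..R, g b = ∫ b in x..R, (-(2 * R) * f' b + S) := by
    apply intervalIntegral.integral_congr_ae
    filter_upwards [hae] with b hb hbI
    rw [Set.uIoc_of_le hx.2.le] at hbI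
    exact hgeq2 b hbI.1
  -- integrability of g on each piece
  have hgi1 : IntervalIntegrable g volume (-R) x := by
    apply ((hint1.const_mul (2 * R)).add (intervalIntegrable_const (c := S))).congr_ae
    rw [Filter.EventuallyEq, ae_restrict_iff' measurableSet_uIoc]
    filter_upwards [hae] with b hb hbI
    rw [Set.uIoc_of_le hx.1.le] at hbI
    exact (hgeq1 b (lt_of_le_of_ne hbI.2 hb)).symm
  have hgi2 : IntervalIntegrable g volume x R := by
    apply ((hint2.const_mul (-(2 * R))).add (intervalIntegrable_const (c := S))).congr_ae
    rw [Filter.EventuallyEq, ae_restrict_iff' measurableSet_uIoc]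
    filter_upwards [hae] with b hb hbI
    rw [Set.uIoc_of_le hx.2.le] at hbI
    exact (hgeq2 b hbI.1).symm
  have hsplit : ∫ b in (-R)..R, g b = (∫ b in (-R)..x, g b) + ∫ b in x..R, g b :=
    (integral_add_adjacent_intervals hgi1 hgi2).symm
  have h1 : ∫ b in (-R)..x, (2 * R * f' b + S) = 2 * R * (f x - f (-R)) + S * (x - (-R)) := by
    rw [intervalIntegral.integral_add (hint1.const_mul _) (intervalIntegrable_const (c := S)),
      intervalIntegral.integral_const_mul, ftc1, intervalIntegral.integral_const]
    rw [smul_eq_mul]; ring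
  have h2 : ∫ b in x..R, (-(2 * R) * f' b + S) = -(2 * R) * (f R - f x) + S * (R - x) := by
    rw [intervalIntegral.integral_add (hint2.const_mul _) (intervalIntegrable_const (c := S)),
      intervalIntegral.integral_const_mul, ftc2, intervalIntegral.integral_const]
    rw [smul_eq_mul]; ring
  have : ∫ b in (-R)..R, g b = 4 * R * f x := by
    rw [hsplit, hcongr1, hcongr2, h1, h2, hS]; ring
  rw [show (∫ b in (-R)..R,
        ((2 * R * f' b + (f R + f (-R))) * truncPow 0 (x - b)
          + (-(2 * R) * f' b + (f R + f (-R))) * truncPow 0 (b - x)))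
      = ∫ b in (-R)..R, g b from rfl, this]
  field_simp
end

section
/- Let w be uniformly distributed on the unit sphere S^{d-1} for d ≥ 1, and z, t ∈ ℝ^d. Then E[ (⟨z,w⟩⟨w,t⟩)² ] = (2⟨z,t⟩² + ‖z‖²‖t‖²) / (d(d+2)). -/
open MeasureTheory Real

open scoped RealInnerProductSpace

/-!
Rotation invariance, via the reflection carrying `x` to `‖x‖ • e`, gives
`∫ ⟪x, w⟫ ^ 4 ∂μ = ‖x‖ ^ 4 * m` with `m = ∫ ⟪e, w⟫ ^ 4 ∂μ` for a fixed unit vector `e`.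
Polarizing, `a² b² = ((a + b)⁴ + (a - b)⁴ - 2 a⁴ - 2 b⁴) / 12`, then yields
`∫ ⟪z, w⟫ ^ 2 * ⟪t, w⟫ ^ 2 ∂μ = (2 ⟪z, t⟫ ^ 2 + ‖z‖ ^ 2 ‖t‖ ^ 2) / 3 * m`. Summing this over all
pairs of vectors of an orthonormal basis, where by Parseval the integrands add up to `‖w‖ ^ 4 = 1`,
gives `d (d + 2) m = 3`.
-/

section InnerProductSpace

variable {E : Type*} [NormedAddCommGroup E] [InnerProductSpace ℝ E] [MeasurableSpace E]
  [BorelSpace E] {μ : Measure E}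

theorem integrable_inner_pow_mul_inner_pow [IsFiniteMeasure μ] {R : ℝ}
    (hR : ∀ᵐ w ∂μ, ‖w‖ ≤ R) (x y : E) (m n : ℕ) :
    Integrable (fun w => ⟪x, w⟫ ^ m * ⟪y, w⟫ ^ n) μ := by
  refine .of_bound (by fun_prop) ((‖x‖ * R) ^ m * (‖y‖ * R) ^ n) ?_
  filter_upwards [hR] with w hw
  have hR0 : 0 ≤ R := (norm_nonneg w).trans hw
  rw [norm_mul, norm_pow, norm_pow, Real.norm_eq_abs, Real.norm_eq_abs]
  gcongr
  · exact (abs_real_inner_le_norm x w).trans (by gcongr)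
  · exact (abs_real_inner_le_norm y w).trans (by gcongr)

theorem integral_comp_inner_linearIsometryEquiv (hinv : ∀ e : E ≃ₗᵢ[ℝ] E, μ.map e = μ)
    (e : E ≃ₗᵢ[ℝ] E) (g : ℝ → ℝ) (x : E) : ∫ w, g ⟪e x, w⟫ ∂μ = ∫ w, g ⟪x, w⟫ ∂μ := by
  have he : Topology.IsClosedEmbedding e := e.toHomeomorph.isClosedEmbedding
  conv_lhs => rw [← hinv e, he.integral_map]
  simp only [LinearIsometryEquiv.inner_map_map]

theorem integral_comp_inner_eq_of_norm_eq (hinv : ∀ e : E ≃ₗᵢ[ℝ] E, μ.map e = μ)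
    (g : ℝ → ℝ) {x y : E} (h : ‖x‖ = ‖y‖) : ∫ w, g ⟪x, w⟫ ∂μ = ∫ w, g ⟪y, w⟫ ∂μ := by
  rw [← integral_comp_inner_linearIsometryEquiv hinv _ g x, Submodule.reflection_sub h]

theorem integral_inner_pow_four (hinv : ∀ e : E ≃ₗᵢ[ℝ] E, μ.map e = μ) {e : E} (he : ‖e‖ = 1)
    (x : E) : ∫ w, ⟪x, w⟫ ^ 4 ∂μ = ‖x‖ ^ 4 * ∫ w, ⟪e, w⟫ ^ 4 ∂μ := by
  rw [integral_comp_inner_eq_of_norm_eq hinv (· ^ 4) (y := ‖x‖ • e) (by simp [norm_smul, he]),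
    ← integral_const_mul]
  simp only [real_inner_smul_left, mul_pow]

theorem integral_inner_sq_mul_inner_sq [IsFiniteMeasure μ] {R : ℝ} (hR : ∀ᵐ w ∂μ, ‖w‖ ≤ R)
    (hinv : ∀ e : E ≃ₗᵢ[ℝ] E, μ.map e = μ) {e : E} (he : ‖e‖ = 1) (z t : E) :
    ∫ w, ⟪z, w⟫ ^ 2 * ⟪t, w⟫ ^ 2 ∂μ
      = (2 * ⟪z, t⟫ ^ 2 + ‖z‖ ^ 2 * ‖t‖ ^ 2) / 3 * ∫ w, ⟪e, w⟫ ^ 4 ∂μ := by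
  have hpol : ∀ w, ⟪z, w⟫ ^ 2 * ⟪t, w⟫ ^ 2
      = (⟪z + t, w⟫ ^ 4 + ⟪z - t, w⟫ ^ 4 - 2 * ⟪z, w⟫ ^ 4 - 2 * ⟪t, w⟫ ^ 4) / 12 := by
    intro w
    rw [inner_add_left, inner_sub_left]
    ring
  have hint (x : E) : Integrable (fun w => ⟪x, w⟫ ^ 4) μ := by
    simpa using integrable_inner_pow_mul_inner_pow hR x x 4 0
  calc ∫ w, ⟪z, w⟫ ^ 2 * ⟪t, w⟫ ^ 2 ∂μ
      = (∫ w, ⟪z + t, w⟫ ^ 4 ∂μ + ∫ w, ⟪z - t, w⟫ ^ 4 ∂μ - 2 * ∫ w, ⟪z, w⟫ ^ 4 ∂μ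
          - 2 * ∫ w, ⟪t, w⟫ ^ 4 ∂μ) / 12 := by
        simp_rw [hpol]
        rw [integral_div, integral_sub, integral_sub, integral_add, integral_const_mul,
          integral_const_mul]
        all_goals fun_prop
    _ = ((‖z + t‖ ^ 2) ^ 2 + (‖z - t‖ ^ 2) ^ 2 - 2 * ‖z‖ ^ 4 - 2 * ‖t‖ ^ 4) / 12
          * ∫ w, ⟪e, w⟫ ^ 4 ∂μ := by
        rw [integral_inner_pow_four hinv he (z + t), integral_inner_pow_four hinv he (z - t),
          integral_inner_pow_four hinv he z, integral_inner_pow_four hinv he t]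
        ring
    _ = _ := by
        rw [norm_add_sq_real, norm_sub_sq_real]
        ring

theorem finrank_mul_integral_inner_pow_four [FiniteDimensional ℝ E] [IsProbabilityMeasure μ]
    (hsphere : ∀ᵐ w ∂μ, ‖w‖ = 1) (hinv : ∀ e : E ≃ₗᵢ[ℝ] E, μ.map e = μ) {e : E}
    (he : ‖e‖ = 1) :
    Module.finrank ℝ E * (Module.finrank ℝ E + 2) * ∫ w, ⟪e, w⟫ ^ 4 ∂μ = 3 := by
  set b := stdOrthonormalBasis ℝ E
  have hR : ∀ᵐ w ∂μ, ‖w‖ ≤ 1 := hsphere.mono fun w hw => hw.le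
  have hone : ∫ w, ∑ i, ∑ j, ⟪b i, w⟫ ^ 2 * ⟪b j, w⟫ ^ 2 ∂μ = 1 := by
    calc _ = ∫ _, (1 : ℝ) ∂μ := integral_congr_ae <| hsphere.mono fun w hw => by
            simp only [← Finset.sum_mul_sum, b.sum_sq_inner_right, hw, one_pow, mul_one]
      _ = 1 := by simp
  have hrow : ∀ i, ∑ j, ∫ w, ⟪b i, w⟫ ^ 2 * ⟪b j, w⟫ ^ 2 ∂μ
      = (Module.finrank ℝ E + 2) / 3 * ∫ w, ⟪e, w⟫ ^ 4 ∂μ := by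
    intro i
    simp only [integral_inner_sq_mul_inner_sq hR hinv he, ← Finset.sum_mul, ← Finset.sum_div,
      Finset.sum_add_distrib, ← Finset.mul_sum, b.sum_sq_inner_left, b.orthonormal.1 _]
    norm_num [add_comm]
  have hint i j := integrable_inner_pow_mul_inner_pow hR (b i) (b j) 2 2
  rw [integral_finsetSum _ fun i _ => integrable_finsetSum _ fun j _ => hint i j] at hone
  simp only [integral_finsetSum _ fun j _ => hint _ j, hrow, Finset.sum_const, Finset.card_univ,
    Fintype.card_fin, nsmul_eq_mul] at hone
  linear_combination 3 * hone

end InnerProductSpace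

/-- For `d ≥ 1`, `w` uniformly distributed on the unit sphere `S^{d-1} ⊂ ℝ^d` (that is, `μ`
is a rotation-invariant probability measure concentrated on the unit sphere), `z, t ∈ ℝ^d`:
`E[(⟨z,w⟩⟨w,t⟩)²] = (2⟨z,t⟩² + ‖z‖²‖t‖²)/(d(d+2))`. -/
theorem stmt13 (d : ℕ) (hd : 1 ≤ d) (μ : Measure (EuclideanSpace ℝ (Fin d)))
    [IsProbabilityMeasure μ]
    (hsphere : ∀ᵐ w ∂μ, ‖w‖ = 1)
    (hinv : ∀ e : EuclideanSpace ℝ (Fin d) ≃ₗᵢ[ℝ] EuclideanSpace ℝ (Fin d), μ.map e = μ)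
    (z t : EuclideanSpace ℝ (Fin d)) :
    ∫ w, ((inner ℝ z w : ℝ) * (inner ℝ w t : ℝ)) ^ 2 ∂μ
      = (2 * (inner ℝ z t : ℝ) ^ 2 + ‖z‖ ^ 2 * ‖t‖ ^ 2) / (d * (d + 2)) := by
  set e := EuclideanSpace.single (⟨0, hd⟩ : Fin d) (1 : ℝ)
  have he : ‖e‖ = 1 := by simp [e]
  have hnorm := finrank_mul_integral_inner_pow_four hsphere hinv he
  rw [finrank_euclideanSpace_fin] at hnorm
  have hd0 : (0 : ℝ) < d := by exact_mod_cast hd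
  have hsq (w : EuclideanSpace ℝ (Fin d)) :
      (⟪z, w⟫ * ⟪w, t⟫) ^ 2 = ⟪z, w⟫ ^ 2 * ⟪t, w⟫ ^ 2 := by
    rw [real_inner_comm t w, mul_pow]
  simp_rw [hsq]
  rw [integral_inner_sq_mul_inner_sq (hsphere.mono fun w hw => hw.le) hinv he,
    eq_div_iff (by positivity)]
  linear_combination (2 * ⟪z, t⟫ ^ 2 + ‖z‖ ^ 2 * ‖t‖ ^ 2) / 3 * hnorm
end
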